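/- For sl_2, the normalized q-characters R_{k,a} = m_{k,a}^{-1} χ_q(W_{k,a}), viewed as polynomials in the variables A_b^{-1}, satisfy: R_{k+1, aq^{-2(k+1)}} = 1 + Σ_{k'=0}^{k} A_{aq^{-2k'-1}}^{-1} A_{aq^{-2k'+1}}^{-1} ··· A_{aq^{-1}}^{-1}, and consequently the sequence R_{k, aq^{-2k}} converges as k → ∞ to the formal power series 1 + Σ_{k'≥0} A_{aq^{-2k'-1}}^{-1}A_{aq^{-2k'+1}}^{-1}···A_{aq^{-1}}^{-1} in ℤ[[A_{aq^m}^{-1}]]_{m∈ℤ} (in the sense that coefficients stabilize). -/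

import Mathlib

noncomputable section

/-- Laurent monomials in the variables `Y_b`, `b ∈ ℂˣ`, written additively:
a monomial is its finitely supported exponent function. -/
abbrev Mon : Type := ℂˣ →₀ ℤ

/-- The Laurent polynomial ring `ℤ[Y_b^±]`. -/
abbrev Rng : Type := AddMonoidAlgebra ℤ Mon

/-- The variable `Y_b` as a monomial. -/
def Y (b : ℂˣ) : Mon := Finsupp.single b 1

/-- A monomial viewed as an element of the Laurent polynomial ring. -/
def X (m : Mon) : Rng := AddMonoidAlgebra.single m 1

/-- The monomial `A_b = Y_{bq⁻¹} Y_{bq}` (sl₂ case). -/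
def Amon (q b : ℂˣ) : Mon := Y (b * q⁻¹) + Y (b * q)

/-- The highest weight monomial `m_{k,a} = Y_a Y_{aq²} ⋯ Y_{aq^{2(k-1)}}`. -/
def mka (q : ℂˣ) (k : ℕ) (a : ℂˣ) : Mon := ∑ s ∈ Finset.range k, Y (a * q ^ (2 * s))

/-- The normalized q-character of the sl₂ Kirillov-Reshetikhin module, given by the
nested formula `1 + A_{aq^{2k-1}}⁻¹(1 + A_{aq^{2k-3}}⁻¹(1 + ⋯ (1 + A_{aq}⁻¹)⋯))`. -/
def Nchi (q : ℂˣ) : ℕ → ℂˣ → Rng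
  | 0, _ => 1
  | (k+1), a => 1 + X (-(Amon q (a * q ^ (2 * k + 1)))) * Nchi q k a

/-- The q-character `χ_q(W_{k,a}) = m_{k,a}(1 + A_{aq^{2k-1}}⁻¹(1 + ⋯ (1 + A_{aq}⁻¹)⋯))`. -/
def chiW (q : ℂˣ) (k : ℕ) (a : ℂˣ) : Rng := X (mka q k a) * Nchi q k a

/-- A monomial `m ≠ 1` is right-negative if for each `a`, at the maximal `q`-power shift
`L` where `m` is supported on `a q^L`, the exponent is negative. -/
def RightNeg (q : ℂˣ) (m : Mon) : Prop :=
  m ≠ 0 ∧ ∀ (a : ℂˣ) (L : ℤ), m (a * q ^ L) ≠ 0 →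
    (∀ l : ℤ, L < l → m (a * q ^ l) = 0) → m (a * q ^ L) < 0

/-- A monomial is dominant if all its exponents are nonnegative. -/
def Dominant (m : Mon) : Prop := ∀ b, 0 ≤ m b

/-!
Substituting `a ↦ a q^{-2}` turns the recursion for `Nchi` into "prepend `A_{aq^{-1}}⁻¹`", so by
induction `R_{k,aq^{-2k}}` is `1` plus the first `k` initial strings
`A_{aq^{-1}}⁻¹ ⋯ A_{aq^{-2k'-1}}⁻¹`. The `k'`-th string has total degree `-2(k'+1)` in the `Y`'s,
so these monomials are pairwise distinct: a fixed monomial occurs in at most one of them, and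
its coefficient in the partial sums is eventually constant.
-/

open Finset

lemma X_zero : X 0 = 1 := rfl

lemma X_add (m n : Mon) : X (m + n) = X m * X n := by
  simp [X]

lemma AddMonoidAlgebra.exists_coeff_sum_range_single_eq_of_injective {R G : Type*} [Semiring R]
    {M : ℕ → G} (hM : Function.Injective M) (r : R) (g : G) :
    ∃ (N : ℕ) (c : R), ∀ n ≥ N,
      (∑ k ∈ range n, AddMonoidAlgebra.single (M k) r).coeff g = c := by
  have hne : ∀ᶠ k in Filter.atTop, M k ≠ g := by
    rw [← Nat.cofinite_eq_atTop]
    exact hM.tendsto_cofinite.eventually (Filter.eventually_cofinite_ne g)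
  obtain ⟨N, hN⟩ := Filter.eventually_atTop.1 hne
  refine ⟨N, ∑ k ∈ range N, (AddMonoidAlgebra.single (M k) r).coeff g, fun n hn => ?_⟩
  rw [AddMonoidAlgebra.coeff_sum, Finsupp.finsetSum_apply]
  refine eventually_constant_sum (fun k hk => ?_) hn
  rw [AddMonoidAlgebra.coeff_single, Finsupp.single_eq_of_ne (hN k hk).symm]

/-- The monomial `A_{aq^{-1}} A_{aq^{-3}} ⋯ A_{aq^{-2n+1}}`. -/
def Astring (q a : ℂˣ) (n : ℕ) : Mon := ∑ j ∈ range n, Amon q (a * q ^ (-2 * (j : ℤ) - 1))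

lemma Astring_zero (q a : ℂˣ) : Astring q a 0 = 0 := rfl

lemma Astring_succ (q a : ℂˣ) (n : ℕ) :
    Astring q a (n + 1) = Amon q (a * q⁻¹) + Astring q (a * q ^ (-2 : ℤ)) n := by
  rw [Astring, sum_range_succ', add_comm]
  congr 1
  · simp
  · refine sum_congr rfl fun j _ => ?_
    rw [mul_assoc, ← zpow_add]
    congr 3
    push_cast
    ring

lemma degree_Amon (q b : ℂˣ) : (Amon q b).degree = 2 := by
  simp only [Amon, Y, map_add, Finsupp.degree_single]
  rfl

lemma degree_Astring (q a : ℂˣ) (n : ℕ) : (Astring q a n).degree = 2 * n := by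
  simp [Astring, map_sum, degree_Amon, mul_comm]

lemma injective_neg_Astring_succ (q a : ℂˣ) :
    Function.Injective fun k : ℕ => -Astring q a (k + 1) := by
  intro k l h
  have := congrArg Finsupp.degree h
  simp only [map_neg, degree_Astring, neg_inj] at this
  omega

lemma Nchi_mul_zpow_eq (q : ℂˣ) (k : ℕ) (a : ℂˣ) :
    Nchi q k (a * q ^ (-2 * (k : ℤ))) = 1 + ∑ k' ∈ range k, X (-Astring q a (k' + 1)) := by
  induction k generalizing a with
  | zero => simp [Nchi]
  | succ k ih =>
    have hstep : a * q ^ (-2 * ((k + 1 : ℕ) : ℤ)) * q ^ (2 * k + 1) = a * q⁻¹ := by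
      rw [mul_assoc, ← zpow_natCast, ← zpow_add, ← zpow_neg_one]
      congr 2
      push_cast
      ring
    have hshift : a * q ^ (-2 * ((k + 1 : ℕ) : ℤ)) = a * q ^ (-2 : ℤ) * q ^ (-2 * (k : ℤ)) := by
      rw [mul_assoc, ← zpow_add]
      congr 2
      push_cast
      ring
    rw [Nchi, hstep, hshift, ih, sum_range_succ', mul_add, mul_one, mul_sum]
    simp only [Astring_succ q a, neg_add, X_add, Astring_zero, neg_zero, X_zero, mul_one]
    rw [add_comm (∑ _ ∈ _, _)]

theorem kr_sl2_asymptotic_general (q : ℂˣ) (a : ℂˣ) :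
    (∀ k : ℕ, Nchi q (k + 1) (a * q ^ (-2 * ((k : ℤ) + 1))) =
        1 + ∑ k' ∈ Finset.range (k + 1),
          X (- ∑ j ∈ Finset.range (k' + 1), Amon q (a * q ^ (-2 * (j : ℤ) - 1)))) ∧
      ∀ m : Mon, ∃ (N : ℕ) (c : ℤ), ∀ k ≥ N,
        (Nchi q (k + 1) (a * q ^ (-2 * ((k : ℤ) + 1)))).coeff m = c := by
  have hclosed (k : ℕ) : Nchi q (k + 1) (a * q ^ (-2 * ((k : ℤ) + 1))) =
      1 + ∑ k' ∈ range (k + 1), X (-Astring q a (k' + 1)) := by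
    exact_mod_cast Nchi_mul_zpow_eq q (k + 1) a
  refine ⟨hclosed, fun m => ?_⟩
  obtain ⟨N, c, hc⟩ := AddMonoidAlgebra.exists_coeff_sum_range_single_eq_of_injective
    (injective_neg_Astring_succ q a) (1 : ℤ) m
  refine ⟨N, (1 : Rng).coeff m + c, fun k hk => ?_⟩
  rw [hclosed, AddMonoidAlgebra.coeff_add, Finsupp.add_apply, ← hc (k + 1) (by omega)]
  rfl

/-- for sl₂ the normalized q-characters satisfy
`R_{k+1,aq^{-2(k+1)}} = 1 + Σ_{k'=0}^{k} A_{aq^{-2k'-1}}⁻¹ ⋯ A_{aq^{-1}}⁻¹`,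
and consequently the coefficients of `R_{k,aq^{-2k}}` stabilize as `k → ∞`
(convergence in the formal power series ring). -/
theorem kr_sl2_asymptotic (q : ℂˣ) (hq : ∀ n : ℤ, n ≠ 0 → q ^ n ≠ 1) (a : ℂˣ) :
    (∀ k : ℕ, Nchi q (k + 1) (a * q ^ (-2 * ((k : ℤ) + 1))) =
        1 + ∑ k' ∈ Finset.range (k + 1),
          X (- ∑ j ∈ Finset.range (k' + 1), Amon q (a * q ^ (-2 * (j : ℤ) - 1)))) ∧
      ∀ m : Mon, ∃ (N : ℕ) (c : ℤ), ∀ k ≥ N,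
        (Nchi q (k + 1) (a * q ^ (-2 * ((k : ℤ) + 1)))).coeff m = c :=
  kr_sl2_asymptotic_general q a
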